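/- arXiv:2112.08187 — 2 statements merged into one kernel-verified Lean document; each statement's English description precedes it below -/
import Mathlib

section
/- Let Z be a nonempty finite set, let π̃ : Z → (0,∞), let w : Z × Z → [0,∞), and let T assign to each z ∈ Z a finite subset T(z) ⊆ Z such that (i) z ∈ T(z) for every z, (ii) whenever z' ∈ T(z) one has T(z') = T(z), and (iii) W(z) := Σ_{u ∈ T(z)} w(z,u) > 0 for every z. Define the transition probability, for z' ∈ T(z), by P(z,z') := (1/W(z)) · min( w(z,z'), π̃(z') · w(z',z) · W(z) / (π̃(z) · W(z')) ), and P(z,z') := 0 for z' ∉ T(z). Then P satisfies detailed balance with respect to π̃: for all z, z' ∈ Z, π̃(z) · P(z,z') = π̃(z') · P(z',z). -/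
/-! Both sides of detailed balance equal the quantity
`min (π̃(z) w(z,z') / W(z)) (π̃(z') w(z',z) / W(z'))`, which is symmetric in `z, z'`;
the invariance of `T` makes `z' ∈ T(z)` symmetric, so both sides vanish together otherwise. -/

lemma mem_comm_of_invariant {Z : Type*} {T : Z → Finset Z} (hmem : ∀ z, z ∈ T z)
    (hinv : ∀ z z', z' ∈ T z → T z' = T z) {z z' : Z} : z' ∈ T z ↔ z ∈ T z' :=
  ⟨fun h => hinv z z' h ▸ hmem z, fun h => hinv z' z h ▸ hmem z'⟩

lemma mul_one_div_mul_min_eq_min_div {p V p' V' : ℝ} (hp : 0 < p) (hV : 0 < V) (hV' : 0 < V')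
    (x y : ℝ) :
    p * (1 / V * min x (p' * y * V / (p * V'))) = min (p * x / V) (p' * y / V') := by
  rw [← mul_assoc, mul_min_of_nonneg _ _ (by positivity)]
  congr 1 <;> field_simp

theorem aaps_detailed_balance_general {Z : Type*} [DecidableEq Z]
    (pit : Z → ℝ) (hpit : ∀ z, 0 < pit z)
    (w : Z → Z → ℝ)
    (T : Z → Finset Z)
    (hmem : ∀ z, z ∈ T z)
    (hinv : ∀ z z', z' ∈ T z → T z' = T z)
    (W : Z → ℝ)
    (hWpos : ∀ z, 0 < W z)
    (P : Z → Z → ℝ)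
    (hP : ∀ z z', P z z' =
      if z' ∈ T z then
        (1 / W z) * min (w z z') (pit z' * w z' z * W z / (pit z * W z'))
      else 0) :
    ∀ z z', pit z * P z z' = pit z' * P z' z := by
  intro z z'
  have hcomm := mem_comm_of_invariant hmem hinv (z := z) (z' := z')
  rw [hP, hP]
  by_cases h : z' ∈ T z
  · rw [if_pos h, if_pos (hcomm.1 h), mul_one_div_mul_min_eq_min_div (hpit z) (hWpos z) (hWpos z'),
      mul_one_div_mul_min_eq_min_div (hpit z') (hWpos z') (hWpos z), min_comm]
  · rw [if_neg h, if_neg (mt hcomm.2 h), mul_zero, mul_zero]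

/-- Detailed balance for the AAPS proposal/accept-reject kernel on a finite state space. -/
theorem aaps_detailed_balance {Z : Type*} [Fintype Z] [Nonempty Z] [DecidableEq Z]
    (pit : Z → ℝ) (hpit : ∀ z, 0 < pit z)
    (w : Z → Z → ℝ) (hw : ∀ z z', 0 ≤ w z z')
    (T : Z → Finset Z)
    (hmem : ∀ z, z ∈ T z)
    (hinv : ∀ z z', z' ∈ T z → T z' = T z)
    (W : Z → ℝ) (hW : ∀ z, W z = ∑ u ∈ T z, w z u)
    (hWpos : ∀ z, 0 < W z)
    (P : Z → Z → ℝ)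
    (hP : ∀ z z', P z z' =
      if z' ∈ T z then
        (1 / W z) * min (w z z') (pit z' * w z' z * W z / (pit z * W z'))
      else 0) :
    ∀ z z', pit z * P z z' = pit z' * P z' z :=
  aaps_detailed_balance_general pit hpit w T hmem hinv W hWpos P hP
end

section
/- Let K ≥ 1 be an integer and let s : ℝ → ℝ be differentiable with s(0) = 0 and s'(0) = 0, and convex on the interval [0, K]. For j ∈ {1,…,K} set r_j := (K+1−j) s(j) and assume Σ_{j=1}^{K} r_j > 0. Let J be the random variable on {1,…,K} with P(J=j) ∝ r_j, set J_K := E[s(J)] = Σ_{j=1}^{K} r_j s(j) / Σ_{j=1}^{K} r_j and Eff_K := J_K/(K+1). Then (a) Eff_K ≥ Eff^{lb}_K := s((K+1)/2)/(K+1); and (b) the lower bound is nondecreasing: for every integer j with 1 ≤ j ≤ K, Eff^{lb}_j ≥ Eff^{lb}_{j-1}, i.e., s((j+1)/2)/(j+1) ≥ s(j/2)/j. -/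
/-!
Let `m = (K+1)/2`. Convexity with `s 0 = 0` makes `s x / x` nondecreasing, which gives (b) at
once. For (a), the weights `r_j = (K+1-j) s(j)` have mean at least `m`: the terms `j` and
`K+1-j` pair off, and `s(j)/j` increasing tilts the weight towards the larger index. Summing
the tangent line `s(j) ≥ s(m) + s'(m)(j - m)` (whose slope `s'(m) ≥ s'(0) = 0`) against these
weights yields `Σ r_j s(j) ≥ s(m) Σ r_j`.
-/

open Finset

namespace ConvexOn

variable {S : Set ℝ} {f : ℝ → ℝ}

theorem add_deriv_mul_sub_le (hf : ConvexOn ℝ S f) {x y : ℝ} (hx : x ∈ S) (hy : y ∈ S)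
    (hd : DifferentiableAt ℝ f x) : f x + deriv f x * (y - x) ≤ f y := by
  rcases lt_trichotomy x y with hxy | rfl | hxy
  · have h := hf.deriv_le_slope hx hy hxy hd
    rw [slope_def_field, le_div_iff₀ (sub_pos.2 hxy)] at h
    linarith
  · simp
  · have h := hf.slope_le_deriv hy hx hxy hd
    rw [slope_def_field, div_le_iff₀ (sub_pos.2 hxy)] at h
    linarith

theorem monotoneOn_div_self (hf : ConvexOn ℝ S f) (h0 : 0 ∈ S) (hf0 : f 0 = 0) :
    MonotoneOn (fun x => f x / x) (S ∩ Set.Ioi 0) := by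
  intro a ha b hb hab
  simpa [hf0] using hf.secant_mono h0 ha.1 hb.1 (ne_of_gt ha.2) (ne_of_gt hb.2) hab

end ConvexOn

theorem mul_sum_le_sum_mul_of_support_line {ι : Type*} (t : Finset ι) (w x : ι → ℝ)
    {f : ℝ → ℝ} {m c : ℝ} (hc : 0 ≤ c) (hw : ∀ i ∈ t, 0 ≤ w i)
    (htan : ∀ i ∈ t, f m + c * (x i - m) ≤ f (x i))
    (hmean : 0 ≤ ∑ i ∈ t, (x i - m) * w i) :
    f m * ∑ i ∈ t, w i ≤ ∑ i ∈ t, w i * f (x i) :=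
  calc f m * ∑ i ∈ t, w i
      ≤ f m * ∑ i ∈ t, w i + c * ∑ i ∈ t, (x i - m) * w i :=
        le_add_of_nonneg_right (mul_nonneg hc hmean)
    _ = ∑ i ∈ t, w i * (f m + c * (x i - m)) := by
        rw [mul_sum, mul_sum, ← sum_add_distrib]
        exact sum_congr rfl fun i _ => by ring
    _ ≤ ∑ i ∈ t, w i * f (x i) :=
        sum_le_sum fun i hi => mul_le_mul_of_nonneg_left (htan i hi) (hw i hi)

theorem sum_Icc_reflect {M : Type*} [AddCommMonoid M] (F : ℕ → M) (K : ℕ) :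
    ∑ j ∈ Icc 1 K, F (K + 1 - j) = ∑ j ∈ Icc 1 K, F j := by
  rw [← Ico_add_one_right_eq_Icc, sum_Ico_reflect F 1 (Nat.le_succ (K + 1))]
  simp

theorem sum_Icc_sub_midpoint_mul_nonneg (K : ℕ) {g : ℝ → ℝ}
    (hg : MonotoneOn (fun x => g x / x) (Set.Icc 1 (K : ℝ))) :
    0 ≤ ∑ j ∈ Icc 1 K, ((j : ℝ) - ((K : ℝ) + 1) / 2) * (((K : ℝ) + 1 - j) * g j) := by
  set F : ℕ → ℝ := fun j => ((j : ℝ) - ((K : ℝ) + 1) / 2) * (((K : ℝ) + 1 - j) * g j)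
  suffices 0 ≤ ∑ j ∈ Icc 1 K, (F j + F (K + 1 - j)) by
    rw [sum_add_distrib, sum_Icc_reflect] at this
    linarith
  refine sum_nonneg fun j hj => ?_
  obtain ⟨hj1, hjK⟩ := mem_Icc.1 hj
  have hj : (j : ℝ) ∈ Set.Icc 1 (K : ℝ) := ⟨by exact_mod_cast hj1, by exact_mod_cast hjK⟩
  set a : ℝ := (K : ℝ) + 1 - j with ha
  have ha' : a ∈ Set.Icc 1 (K : ℝ) := ⟨by linarith [hj.2], by linarith [hj.1]⟩
  have hpair : F j + F (K + 1 - j) = ((j : ℝ) - a) / 2 * (a * j) * (g j / j - g a / a) := by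
    simp only [F, Nat.cast_sub (by omega : j ≤ K + 1), Nat.cast_add, Nat.cast_one, ← ha]
    field_simp [(by linarith [hj.1] : (j : ℝ) ≠ 0), (by linarith [ha'.1] : a ≠ 0)]
    ring
  have hpos : 0 ≤ a * j := by nlinarith [hj.1, ha'.1]
  rw [hpair]
  rcases le_total a j with haj | hja
  · exact mul_nonneg (mul_nonneg (by linarith) hpos) (sub_nonneg.2 (hg ha' hj haj))
  · exact mul_nonneg_of_nonpos_of_nonpos (mul_nonpos_of_nonpos_of_nonneg (by linarith) hpos)
      (sub_nonpos.2 (hg hj ha' hja))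

/-- Lower bound on the efficiency of the AAPS tuning diagnostic: with
`r_j = (K+1-j) s(j)` and `J_K = Σ r_j s(j) / Σ r_j`, the efficiency
`Eff_K = J_K/(K+1)` is at least `s((K+1)/2)/(K+1)`, and this lower bound is
nondecreasing in `K`. -/
theorem aaps_efficiency_lower_bound (K : ℕ) (hK : 1 ≤ K)
    (s : ℝ → ℝ) (hdiff : Differentiable ℝ s)
    (hs0 : s 0 = 0) (hs'0 : deriv s 0 = 0)
    (hconv : ConvexOn ℝ (Set.Icc (0 : ℝ) (K : ℝ)) s)
    (hpos : 0 < ∑ j ∈ Finset.Icc 1 K, ((K : ℝ) + 1 - (j : ℝ)) * s (j : ℝ)) :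
    (∑ j ∈ Finset.Icc 1 K, ((K : ℝ) + 1 - (j : ℝ)) * s (j : ℝ) * s (j : ℝ))
        / (∑ j ∈ Finset.Icc 1 K, ((K : ℝ) + 1 - (j : ℝ)) * s (j : ℝ))
        / ((K : ℝ) + 1)
      ≥ s (((K : ℝ) + 1) / 2) / ((K : ℝ) + 1) ∧
    ∀ j : ℕ, 1 ≤ j → j ≤ K →
      s (((j : ℝ) + 1) / 2) / ((j : ℝ) + 1) ≥ s ((j : ℝ) / 2) / (j : ℝ) := by
  have hK1 : (1 : ℝ) ≤ K := by exact_mod_cast hK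
  have h0 : (0 : ℝ) ∈ Set.Icc 0 (K : ℝ) := ⟨le_rfl, by linarith⟩
  have hmono := hconv.monotoneOn_div_self h0 hs0
  refine ⟨?_, fun j hj1 hjK => ?_⟩
  · set m : ℝ := ((K : ℝ) + 1) / 2 with hm_def
    have hm : m ∈ Set.Icc 0 (K : ℝ) := ⟨by positivity, by linarith⟩
    have hslope : 0 ≤ deriv s m :=
      hs'0 ▸ hconv.monotoneOn_deriv (fun x _ => hdiff x) h0 hm (by positivity)
    have hmean := sum_Icc_sub_midpoint_mul_nonneg K (hmono.mono fun x hx =>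
      ⟨⟨by linarith [hx.1], hx.2⟩, one_pos.trans_le hx.1⟩)
    have hmem (j : ℕ) (hj : j ∈ Icc 1 K) : (j : ℝ) ∈ Set.Icc 0 (K : ℝ) :=
      ⟨j.cast_nonneg, by exact_mod_cast (mem_Icc.1 hj).2⟩
    have key := mul_sum_le_sum_mul_of_support_line (Icc 1 K)
      (fun j => ((K : ℝ) + 1 - j) * s j) (fun j => (j : ℝ)) hslope
      (fun j hj => mul_nonneg (by linarith [(hmem j hj).2])
        (by simpa [hs0, hs'0] using hconv.add_deriv_mul_sub_le h0 (hmem j hj) (hdiff 0)))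
      (fun j hj => hconv.add_deriv_mul_sub_le hm (hmem j hj) (hdiff m)) hmean
    rw [ge_iff_le, div_le_div_iff_of_pos_right (by positivity), le_div_iff₀ hpos]
    exact key
  · have hj : (1 : ℝ) ≤ j := by exact_mod_cast hj1
    have hjK' : (j : ℝ) ≤ K := by exact_mod_cast hjK
    have h := hmono ⟨⟨by positivity, by linarith⟩, by simp only [Set.mem_Ioi]; positivity⟩
      ⟨⟨by positivity, by linarith⟩, by simp only [Set.mem_Ioi]; positivity⟩
      (by linarith : (j : ℝ) / 2 ≤ ((j : ℝ) + 1) / 2)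
    simp only [div_div_eq_mul_div] at h
    rw [mul_div_right_comm, mul_div_right_comm] at h
    rw [ge_iff_le]
    linarith
end
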